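/- arXiv:2602.09049 — 2 statements merged into one kernel-verified Lean document; each statement's English description precedes it below -/
import Mathlib

section
/- For every integer k ≥ 1, every finite simple graph on at least 2^k − 1 vertices contains the edgeless graph on some k of its vertices as a vertex-minor. Equivalently, the vertex-minor Ramsey number satisfies R_vm(k) ≤ 2^k − 1. -/
/-!
Over `ZMod 2`, let `D(Z)` be the set of vertices with an odd number of neighbours in `Z`. If
`T` contains more than half of the `n` vertices, comparing the `2 ^ n` sets `Z` with the
`4 ^ (n - |T|)` possible traces of `Z` and `D(Z)` outside `T` gives, by linearity, a nonempty
`Z` with `Z ∪ D(Z) ⊆ T`. Local complementations at vertices of `Z ∩ D(Z)`, or at a neighbour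
outside `T` of some `u ∈ Z`, shrink `Z` while keeping this property, until some `v ∈ Z` has all
its neighbours in `T`. So every graph on `n` vertices is locally equivalent to one with a vertex
`v` of degree at most `n / 2`; deleting the neighbours of `v` leaves `v` isolated next to at
least `n / 2 - 1` other vertices, and induction on `k` finishes.
-/

open Finset

variable {V : Type*}

/-- Local complementation at `v`: complement the induced subgraph on the
neighborhood of `v`. -/
def localComp (G : SimpleGraph V) (v : V) : SimpleGraph V where
  Adj u w := (G.Adj v u ∧ G.Adj v w ∧ u ≠ w ∧ ¬ G.Adj u w) ∨
    (¬ (G.Adj v u ∧ G.Adj v w) ∧ G.Adj u w)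
  symm := by
    refine ⟨?_⟩
    intro u w h
    rcases h with ⟨h1, h2, h3, h4⟩ | ⟨h1, h2⟩
    · exact Or.inl ⟨h2, h1, h3.symm, fun a => h4 a.symm⟩
    · exact Or.inr ⟨fun hc => h1 ⟨hc.2, hc.1⟩, h2.symm⟩
  loopless := by
    refine ⟨?_⟩
    rintro u (⟨-, -, h, -⟩ | ⟨-, h⟩)
    · exact h rfl
    · exact G.loopless.irrefl u h

/-- Pivot at an edge `uv`: `G × uv = G * u * v * u`. -/
def pivotGraph (G : SimpleGraph V) (u v : V) : SimpleGraph V :=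
  localComp (localComp (localComp G u) v) u

/-- Delete a vertex from a graph. -/
def deleteVertex (G : SimpleGraph V) (v : V) : SimpleGraph V where
  Adj a b := G.Adj a b ∧ a ≠ v ∧ b ≠ v
  symm := ⟨fun _ _ h => ⟨h.1.symm, h.2.2, h.2.1⟩⟩
  loopless := ⟨fun a h => G.loopless.irrefl a h.1⟩

/-- One step of forming a vertex-minor.  A "partial graph" is a pair of a
vertex set together with a graph on those vertices: one may locally complement
at a vertex of the current vertex set, or delete a vertex of it. -/
inductive VMStep [DecidableEq V] : Finset V × SimpleGraph V → Finset V × SimpleGraph V → Prop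
  | lc (S : Finset V) (G : SimpleGraph V) (v : V) (hv : v ∈ S) :
      VMStep (S, G) (S, localComp G v)
  | del (S : Finset V) (G : SimpleGraph V) (v : V) (hv : v ∈ S) :
      VMStep (S, G) (S.erase v, deleteVertex G v)

/-- `Q = (U, H)` is obtained from `P = (S, G)` by a sequence of local
complementations and vertex deletions, exactly as a labeled graph. -/
def IsVertexMinor [DecidableEq V] (P Q : Finset V × SimpleGraph V) : Prop :=
  Relation.ReflTransGen VMStep P Q

open scoped Classical in
noncomputable def nbrParity (G : SimpleGraph V) (Z : Finset V) (w : V) : ZMod 2 :=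
  ∑ z ∈ Z, if G.Adj w z then 1 else 0

section Parity

open scoped Classical

variable {G : SimpleGraph V} {Z : Finset V}

lemma ZMod.two_eq_zero_or_eq_one (x : ZMod 2) : x = 0 ∨ x = 1 := by
  revert x; decide

lemma exists_adj_of_nbrParity_ne_zero {w : V} (h : nbrParity G Z w ≠ 0) :
    ∃ z ∈ Z, G.Adj w z := by
  obtain ⟨z, hz, hne⟩ := exists_ne_zero_of_sum_ne_zero h
  exact ⟨z, hz, by_contra fun hwz => hne (if_neg hwz)⟩

lemma ite_localComp_adj (G : SimpleGraph V) (u w z : V) :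
    (if (localComp G u).Adj w z then 1 else 0 : ZMod 2) =
      (if G.Adj w z then 1 else 0) + (if G.Adj u w then 1 else 0) *
        ((if G.Adj u z then 1 else 0) + if w = z then 1 else 0) := by
  by_cases hwz : w = z
  · subst hwz
    split_ifs <;> simp_all [CharTwo.add_self_eq_zero]
  · by_cases h₁ : G.Adj u w <;> by_cases h₂ : G.Adj u z <;> by_cases h₃ : G.Adj w z <;>
      simp [localComp, hwz, h₁, h₂, h₃, CharTwo.add_self_eq_zero]

lemma nbrParity_localComp (G : SimpleGraph V) (u : V) (Z : Finset V) (w : V) :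
    nbrParity (localComp G u) Z w =
      nbrParity G Z w + (if G.Adj u w then 1 else 0) *
        (nbrParity G Z u + if w ∈ Z then 1 else 0) := by
  simp only [nbrParity, ite_localComp_adj, sum_add_distrib, ← mul_sum, sum_ite_eq]

lemma nbrParity_localComp_of_nbrParity_eq_zero {Z : Finset V} {w b : V}
    (hw : nbrParity G Z w = 0) (hb : b ∉ Z) :
    nbrParity (localComp G w) Z b = nbrParity G Z b := by
  simp [nbrParity_localComp, hw, hb]

variable [DecidableEq V]

lemma nbrParity_erase {u : V} (hu : u ∈ Z) (w : V) :
    nbrParity G (Z.erase u) w = nbrParity G Z w + if G.Adj w u then 1 else 0 := by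
  rw [nbrParity, nbrParity, sum_erase_eq_sub hu, CharTwo.sub_eq_add]

lemma nbrParity_symmDiff (X Y : Finset V) (w : V) :
    nbrParity G (symmDiff X Y) w = nbrParity G X w + nbrParity G Y w := by
  rw [nbrParity, symmDiff_eq_sup_sdiff_inf, sum_sdiff_eq_sub (inf_le_sup : X ∩ Y ⊆ X ∪ Y),
    CharTwo.sub_eq_add]
  exact sum_union_inter

lemma nbrParity_localComp_erase {Z : Finset V} {u b : V} (hu : u ∈ Z)
    (hpu : nbrParity G Z u = 1) (hb : b ∉ Z) :
    nbrParity (localComp G u) (Z.erase u) b = nbrParity G Z b := by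
  have hbu : (localComp G u).Adj b u ↔ G.Adj u b := by simp [localComp, G.adj_comm b u]
  rw [nbrParity_erase hu, nbrParity_localComp, hpu, if_neg hb]
  by_cases h : G.Adj u b <;> simp [h, hbu, add_assoc, CharTwo.add_self_eq_zero]

end Parity

def deleteVertices (G : SimpleGraph V) (B : Finset V) : SimpleGraph V where
  Adj a b := G.Adj a b ∧ a ∉ B ∧ b ∉ B
  symm := ⟨fun _ _ h => ⟨h.1.symm, h.2.2, h.2.1⟩⟩
  loopless := ⟨fun a h => G.loopless.irrefl a h.1⟩

lemma support_localComp_subset (G : SimpleGraph V) (u : V) :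
    (localComp G u).support ⊆ G.support := by
  rintro a ⟨b, ⟨hua, -⟩ | ⟨-, hab⟩⟩
  exacts [⟨u, hua.symm⟩, ⟨b, hab⟩]

lemma deleteVertices_eq_bot {G : SimpleGraph V} {A : Finset V} (hG : G.support ⊆ A) :
    deleteVertices G A = ⊥ := by
  ext a b
  simp only [deleteVertices, SimpleGraph.bot_adj, iff_false]
  exact fun h => h.2.1 (hG ⟨b, h.1⟩)

section VertexMinor

variable [DecidableEq V]

lemma VMStep.support_subset {P Q : Finset V × SimpleGraph V} (h : VMStep P Q)
    (hP : P.2.support ⊆ P.1) : Q.2.support ⊆ Q.1 := by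
  cases h with
  | lc S G v _ => exact (support_localComp_subset G v).trans hP
  | del S G v _ =>
    rintro a ⟨b, hab, hav, -⟩
    exact mem_erase.2 ⟨hav, hP ⟨b, hab⟩⟩

lemma IsVertexMinor.support_subset {P Q : Finset V × SimpleGraph V} (h : IsVertexMinor P Q)
    (hP : P.2.support ⊆ P.1) : Q.2.support ⊆ Q.1 := by
  induction h with
  | refl => exact hP
  | tail _ hstep ih => exact hstep.support_subset ih

lemma VMStep.fst_subset {P Q : Finset V × SimpleGraph V} (h : VMStep P Q) : Q.1 ⊆ P.1 := by
  cases h with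
  | lc => exact subset_rfl
  | del => exact erase_subset _ _

lemma VMStep.insert {P Q : Finset V × SimpleGraph V} (h : VMStep P Q) {v : V} (hv : v ∉ P.1) :
    VMStep (insert v P.1, P.2) (insert v Q.1, Q.2) := by
  cases h with
  | lc S G u hu => exact .lc _ G u (mem_insert_of_mem hu)
  | del S G u hu =>
    rw [← erase_insert_of_ne (ne_of_mem_of_not_mem hu hv).symm]
    exact .del _ G u (mem_insert_of_mem hu)

lemma IsVertexMinor.insert {P Q : Finset V × SimpleGraph V} (h : IsVertexMinor P Q) {v : V}
    (hv : v ∉ P.1) : IsVertexMinor (insert v P.1, P.2) (insert v Q.1, Q.2) := by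
  induction h using Relation.ReflTransGen.head_induction_on with
  | refl => exact .refl
  | head hstep _ ih => exact .head (hstep.insert hv) (ih fun h => hv (hstep.fst_subset h))

lemma isVertexMinor_localComp {S : Finset V} {u : V} (hu : u ∈ S) (G : SimpleGraph V) :
    IsVertexMinor (S, G) (S, localComp G u) :=
  .single (.lc S G u hu)

lemma isVertexMinor_deleteVertices {A B : Finset V} (hBA : B ⊆ A) (G : SimpleGraph V) :
    IsVertexMinor (A, G) (A \ B, deleteVertices G B) := by
  induction B using Finset.induction_on generalizing A G with
  | empty =>
    have hG : deleteVertices G ∅ = G := by ext; simp [deleteVertices]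
    rw [sdiff_empty, hG]
    exact .refl
  | insert s B hsB ih =>
    have hBA' : B ⊆ A.erase s := fun x hx =>
      mem_erase.2 ⟨ne_of_mem_of_not_mem hx hsB, hBA (mem_insert_of_mem hx)⟩
    have hdel : deleteVertices (deleteVertex G s) B = deleteVertices G (insert s B) := by
      ext a b
      simp only [deleteVertices, deleteVertex, mem_insert]
      tauto
    have hrest := ih hBA' (deleteVertex G s)
    rw [erase_sdiff_comm, ← sdiff_insert, hdel] at hrest
    exact .head (.del A G s (hBA (mem_insert_self s B))) hrest

end VertexMinor

section Reduction

open scoped Classical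

variable [DecidableEq V] {A T : Finset V} {G : SimpleGraph V}

lemma exists_nonempty_subset_nbrParity_eq_zero (hG : G.support ⊆ A)
    (hT : 2 * #(A \ T) < #A) :
    ∃ Z : Finset V, Z.Nonempty ∧ Z ⊆ T ∧ ∀ w ∉ T, nbrParity G Z w = 0 := by
  set R := A \ T
  have hcard : #(R.powerset ×ˢ R.powerset) < #A.powerset := by
    simp only [card_product, card_powerset, ← pow_add]
    exact Nat.pow_lt_pow_right (by norm_num) (by omega)
  obtain ⟨X, hX, Y, hY, hXY, heq⟩ := exists_ne_map_eq_of_card_lt_of_maps_to hcard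
    (f := fun X => (X ∩ R, {w ∈ R | nbrParity G X w = 1}))
    fun X _ =>
      mem_product.2 ⟨mem_powerset.2 inter_subset_right, mem_powerset.2 (filter_subset _ _)⟩
  simp only [Prod.mk.injEq, Finset.ext_iff, mem_inter, mem_filter] at heq
  rw [mem_powerset] at hX hY
  refine ⟨symmDiff X Y, ?_, ?_, ?_⟩
  · exact nonempty_iff_ne_empty.2 fun h => hXY (symmDiff_eq_bot.1 h)
  · intro x hx
    by_contra hxT
    rw [mem_symmDiff] at hx
    have hxA : x ∈ A := by rcases hx with h | h; exacts [hX h.1, hY h.1]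
    have := heq.1 x
    simp only [show x ∈ R from mem_sdiff.2 ⟨hxA, hxT⟩, and_true] at this
    tauto
  · intro w hwT
    by_contra hw
    have hwA : w ∈ A := by
      obtain ⟨z, -, hwz⟩ := exists_adj_of_nbrParity_ne_zero hw
      exact hG ⟨z, hwz⟩
    have hwR : w ∈ R := mem_sdiff.2 ⟨hwA, hwT⟩
    have parity_eq : ∀ a b : ZMod 2, (a = 1 ↔ b = 1) → a + b = 0 := by decide
    exact hw (nbrParity_symmDiff X Y w ▸ parity_eq _ _ (by simpa [hwR] using heq.2 w))

lemma exists_isVertexMinor_adj_subset {Z : Finset V} (hG : G.support ⊆ A) (hZ : Z.Nonempty)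
    (hZT : Z ⊆ T) (hpar : ∀ b ∉ T, nbrParity G Z b = 0) :
    ∃ H, ∃ v ∈ T, IsVertexMinor (A, G) (A, H) ∧ ∀ b, H.Adj v b → b ∈ T := by
  induction Z using Finset.strongInduction generalizing G with
  | H Z ih =>
    obtain ⟨u, hu⟩ := hZ
    have of_nbrParity_eq_one : ∀ G' : SimpleGraph V, G'.support ⊆ A →
        IsVertexMinor (A, G) (A, G') → (∀ b ∉ T, nbrParity G' Z b = 0) →
        nbrParity G' Z u = 1 →
        ∃ H, ∃ v ∈ T, IsVertexMinor (A, G) (A, H) ∧ ∀ b, H.Adj v b → b ∈ T := by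
      intro G' hG' hGG' hpar' hpu
      obtain ⟨z, hz, huz⟩ := exists_adj_of_nbrParity_ne_zero (hpu ▸ one_ne_zero)
      obtain ⟨H, v, hvT, hmin, hv⟩ := ih (Z.erase u) (erase_ssubset hu)
        ((support_localComp_subset G' u).trans hG') ⟨z, mem_erase.2 ⟨huz.ne', hz⟩⟩
        ((erase_subset u Z).trans hZT)
        fun b hb => (nbrParity_localComp_erase hu hpu (hb <| hZT ·)).trans (hpar' b hb)
      exact ⟨H, v, hvT,
        hGG'.trans ((isVertexMinor_localComp (hG' ⟨z, huz⟩) G').trans hmin), hv⟩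
    rcases ZMod.two_eq_zero_or_eq_one (nbrParity G Z u) with hpu | hpu
    · by_cases hN : ∀ b, G.Adj u b → b ∈ T
      · exact ⟨G, u, hZT hu, .refl, hN⟩
      push Not at hN
      obtain ⟨w, huw, hwT⟩ := hN
      -- `w ∉ T` has even parity: complementing at `w` keeps the invariant and makes `u`'s odd
      refine of_nbrParity_eq_one (localComp G w) ((support_localComp_subset G w).trans hG)
        (isVertexMinor_localComp (hG ⟨u, huw.symm⟩) G)
        (fun b hb => (nbrParity_localComp_of_nbrParity_eq_zero (hpar w hwT) (hb <| hZT ·)).trans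
          (hpar b hb)) ?_
      simp [nbrParity_localComp, hpu, hpar w hwT, huw.symm, hu]
    · exact of_nbrParity_eq_one G hG .refl hpar hpu

lemma exists_isVertexMinor_two_mul_card_adj_le (hG : G.support ⊆ A) (hA : A.Nonempty) :
    ∃ H, ∃ v ∈ A, IsVertexMinor (A, G) (A, H) ∧ 2 * #{w ∈ A | H.Adj v w} ≤ #A := by
  have hA := hA.card_pos
  obtain ⟨T, hTA, hT⟩ := exists_subset_card_eq (show #A / 2 + 1 ≤ #A by omega)
  obtain ⟨Z, hZ, hZT, hpar⟩ := exists_nonempty_subset_nbrParity_eq_zero hG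
    (by rw [card_sdiff_of_subset hTA]; omega)
  obtain ⟨H, v, hvT, hGH, hv⟩ := exists_isVertexMinor_adj_subset hG hZ hZT hpar
  refine ⟨H, v, hTA hvT, hGH, ?_⟩
  have hsub : {w ∈ A | H.Adj v w} ⊆ T.erase v := fun w hw =>
    mem_erase.2 ⟨(mem_filter.1 hw).2.ne', hv w (mem_filter.1 hw).2⟩
  have := card_le_card hsub
  rw [card_erase_of_mem hvT] at this
  omega

theorem exists_isVertexMinor_bot (k : ℕ) (hG : G.support ⊆ A) (hA : 2 ^ k - 1 ≤ #A) :
    ∃ U ⊆ A, #U = k ∧ IsVertexMinor (A, G) (U, ⊥) := by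
  induction k generalizing A G with
  | zero =>
    refine ⟨∅, empty_subset A, rfl, ?_⟩
    simpa [deleteVertices_eq_bot hG] using isVertexMinor_deleteVertices (subset_refl A) G
  | succ k ih =>
    obtain ⟨H, v, hvA, hGH, hdeg⟩ :=
      exists_isVertexMinor_two_mul_card_adj_le hG
        (card_pos.1 (by have := Nat.one_le_two_pow (n := k); rw [pow_succ] at hA; omega))
    set N := {w ∈ A | H.Adj v w}
    have hH : H.support ⊆ A := hGH.support_subset hG
    have hvN : v ∈ A \ N := mem_sdiff.2 ⟨hvA, fun h => H.loopless.irrefl v (mem_filter.1 h).2⟩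
    -- after deleting `N`, the vertex `v` is isolated
    have hsupp : (deleteVertices H N).support ⊆ (A \ N).erase v := by
      rintro a ⟨b, hab, haN, hbN⟩
      have haA : a ∈ A := hH ⟨b, hab⟩
      have hav : a ≠ v := by
        rintro rfl
        exact hbN (mem_filter.2 ⟨hH ⟨a, hab.symm⟩, hab⟩)
      exact mem_erase.2 ⟨hav, mem_sdiff.2 ⟨haA, haN⟩⟩
    have hcard : 2 ^ k - 1 ≤ #((A \ N).erase v) := by
      rw [card_erase_of_mem hvN, card_sdiff_of_subset (show N ⊆ A from filter_subset _ A)]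
      rw [pow_succ] at hA
      omega
    obtain ⟨U, hUA, hU, hmin⟩ := ih hsupp hcard
    have hvU : v ∉ U := fun h => (mem_erase.1 (hUA h)).1 rfl
    refine ⟨insert v U, insert_subset hvA (hUA.trans ((erase_subset _ _).trans sdiff_subset)),
      by rw [card_insert_of_notMem hvU, hU], ?_⟩
    have hlift := hmin.insert (notMem_erase v (A \ N))
    rw [insert_erase hvN] at hlift
    exact hGH.trans ((isVertexMinor_deleteVertices (filter_subset _ A) H).trans hlift)

end Reduction

theorem vm_ramsey_upper_general (k : ℕ) (W : Type*) [Fintype W] [DecidableEq W]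
    (hW : 2 ^ k - 1 ≤ Fintype.card W) (G : SimpleGraph W) :
    ∃ U : Finset W, U.card = k ∧
      IsVertexMinor (Finset.univ, G) (U, (⊥ : SimpleGraph W)) := by
  obtain ⟨U, -, hU, hmin⟩ := exists_isVertexMinor_bot k (A := univ) (G := G)
    (by simp) (by rwa [card_univ])
  exact ⟨U, hU, hmin⟩

/-- For every integer `k ≥ 1`, every finite simple graph on at least `2^k − 1`
vertices contains the edgeless graph on some `k` of its vertices as a
vertex-minor; equivalently, `R_vm(k) ≤ 2^k − 1`. -/
theorem vm_ramsey_upper (k : ℕ) (hk : 1 ≤ k) (W : Type*) [Fintype W] [DecidableEq W]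
    (hW : 2 ^ k - 1 ≤ Fintype.card W) (G : SimpleGraph W) :
    ∃ U : Finset W, U.card = k ∧
      IsVertexMinor (Finset.univ, G) (U, (⊥ : SimpleGraph W)) :=
  vm_ramsey_upper_general k W hW G
end

section
/- Let G ∈ 𝒢_k and let A ∈ F₂^{k×k} be its adjacency matrix over F₂ (symmetric with zero diagonal, A_{uv} = 1 iff uv ∈ E(G)). Define λ^Com_G = 2^{−k}·Σ_{S⊆[k]} (−1)^{|E(G)∩E(K_S)|} and λ^Piv_G = 2^{−2k}·Σ_{S,T⊆[k]} (−1)^{|E(G)∩E(K^△_{S,T})|}. Then λ^Piv_G = 2^{−rank_{F₂}(A)} and (λ^Com_G)² ≤ λ^Piv_G. -/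
/-!
Write `x, y` for the indicator vectors of `S, T` and `U` for the strictly upper triangular part
of `A`, so that `A = U + Uᵀ`. The parity of `|E(G) ∩ E(K_S)|` is the quadratic form `xᵀ U x`,
whose polarisation is `xᵀ A y`, and the parity of `|E(G) ∩ E(K^△_{S,T})|` is exactly `xᵀ A y`.
Summing `(-1)^{xᵀ A y}` over `y` leaves `2^k` for `x ∈ ker Aᵀ` and `0` otherwise, so
`λ^Piv = 2^{-k} |ker Aᵀ| = 2^{-rank A}`. Squaring the Gauss sum `∑ₓ (-1)^{xᵀ U x}` and
substituting `y = x + z` gives `∑_z (-1)^{zᵀ U z} ∑ₓ (-1)^{xᵀ A z}`; every inner sum is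
nonnegative, so this is at most `∑_z ∑ₓ (-1)^{xᵀ A z} = 2^{2k} λ^Piv`.
-/

open Finset

/-- `K_S`: the complete graph on the vertex subset `S`. -/
def cliqueOn {V : Type*} (S : Finset V) : SimpleGraph V where
  Adj a b := a ∈ S ∧ b ∈ S ∧ a ≠ b
  symm := ⟨fun _ _ h => ⟨h.2.1, h.1, h.2.2.symm⟩⟩
  loopless := ⟨fun _ h => h.2.2 rfl⟩

/-- `K^△_{S,T}`: the complete tripartite graph with parts `S \ T`, `T \ S`,
`S ∩ T` (edges exactly between distinct parts). -/
def triOn {V : Type*} (S T : Finset V) : SimpleGraph V where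
  Adj a b := (a ∈ S ∨ a ∈ T) ∧ (b ∈ S ∨ b ∈ T) ∧
    ¬((a ∈ S ↔ b ∈ S) ∧ (a ∈ T ↔ b ∈ T))
  symm := ⟨fun _ _ h => ⟨h.2.1, h.1, fun hc => h.2.2 ⟨hc.1.symm, hc.2.symm⟩⟩⟩
  loopless := ⟨fun _ h => h.2.2 ⟨Iff.rfl, Iff.rfl⟩⟩

/-- `G △ H`: the graph whose edge set is the symmetric difference of the edge
sets of `G` and `H`. -/
def gSymmDiff {V : Type*} (G H : SimpleGraph V) : SimpleGraph V where
  Adj a b := (G.Adj a b ∧ ¬ H.Adj a b) ∨ (H.Adj a b ∧ ¬ G.Adj a b)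
  symm := by
    refine ⟨?_⟩
    rintro a b (⟨h1, h2⟩ | ⟨h1, h2⟩)
    · exact Or.inl ⟨h1.symm, fun hc => h2 hc.symm⟩
    · exact Or.inr ⟨h1.symm, fun hc => h2 hc.symm⟩
  loopless := by
    refine ⟨?_⟩
    rintro a (⟨h1, -⟩ | ⟨h1, -⟩)
    · exact G.irrefl h1
    · exact H.irrefl h1

/-- `χ_G(H) = (−1)^{|E(G) ∩ E(H)|}`. -/
noncomputable def chi {k : ℕ} (G : SimpleGraph (Fin k)) : SimpleGraph (Fin k) → ℝ :=
  fun H => (-1 : ℝ) ^ (Nat.card ↥(G ⊓ H).edgeSet)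

/-- The `Com` walk operator: `(Com f)(H) = 2^{−k}·Σ_{S ⊆ [k]} f(H △ K_S)`. -/
noncomputable def ComOp (k : ℕ) (f : SimpleGraph (Fin k) → ℝ) : SimpleGraph (Fin k) → ℝ :=
  fun H => ((2 : ℝ) ^ k)⁻¹ * ∑ S : Finset (Fin k), f (gSymmDiff H (cliqueOn S))

/-- The `Piv` walk operator:
`(Piv f)(H) = 2^{−2k}·Σ_{S,T ⊆ [k]} f(H △ K^△_{S,T})`. -/
noncomputable def PivOp (k : ℕ) (f : SimpleGraph (Fin k) → ℝ) : SimpleGraph (Fin k) → ℝ :=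
  fun H => ((2 : ℝ) ^ (2 * k))⁻¹ *
    ∑ S : Finset (Fin k), ∑ T : Finset (Fin k), f (gSymmDiff H (triOn S T))

/-- `λ^Com_G = 2^{−k}·Σ_{S ⊆ [k]} (−1)^{|E(G) ∩ E(K_S)|}`. -/
noncomputable def lamCom (k : ℕ) (G : SimpleGraph (Fin k)) : ℝ :=
  ((2 : ℝ) ^ k)⁻¹ * ∑ S : Finset (Fin k), (-1 : ℝ) ^ (Nat.card ↥(G ⊓ cliqueOn S).edgeSet)

/-- `λ^Piv_G = 2^{−2k}·Σ_{S,T ⊆ [k]} (−1)^{|E(G) ∩ E(K^△_{S,T})|}`. -/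
noncomputable def lamPiv (k : ℕ) (G : SimpleGraph (Fin k)) : ℝ :=
  ((2 : ℝ) ^ (2 * k))⁻¹ *
    ∑ S : Finset (Fin k), ∑ T : Finset (Fin k),
      (-1 : ℝ) ^ (Nat.card ↥(G ⊓ triOn S T).edgeSet)

open Classical in
/-- The adjacency matrix of `G` over `F₂` (symmetric with zero diagonal). -/
noncomputable def adjMat (k : ℕ) (G : SimpleGraph (Fin k)) : Matrix (Fin k) (Fin k) (ZMod 2) :=
  Matrix.of fun u w => if G.Adj u w then 1 else 0

open Matrix

noncomputable section

lemma ZMod.two_eq_zero_or_one (a : ZMod 2) : a = 0 ∨ a = 1 := by decide +revert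

def signChar : AddChar (ZMod 2) ℝ := AddChar.zmodChar 2 (ζ := (-1 : ℝ)) (by norm_num)

lemma signChar_natCast (n : ℕ) : signChar n = (-1) ^ n := AddChar.zmodChar_apply' _ n

lemma signChar_one : signChar 1 = -1 := by simpa using signChar_natCast 1

lemma signChar_le_one (a : ZMod 2) : signChar a ≤ 1 := by
  obtain rfl | rfl := ZMod.two_eq_zero_or_one a
  · simp
  · norm_num [signChar_one]

lemma signChar_eq_one_iff {a : ZMod 2} : signChar a = 1 ↔ a = 0 := by
  obtain rfl | rfl := ZMod.two_eq_zero_or_one a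
  · simp
  · norm_num [signChar_one]

section CharacterSums

variable {ι : Type*} [Fintype ι] [DecidableEq ι]

lemma sum_signChar_dotProduct (c : ι → ZMod 2) :
    ∑ y, signChar (c ⬝ᵥ y) = if c = 0 then 2 ^ Fintype.card ι else 0 := by
  let ψ : AddChar (ι → ZMod 2) ℝ := signChar.compAddMonoidHom
    { toFun := (c ⬝ᵥ ·), map_zero' := dotProduct_zero c, map_add' := dotProduct_add c }
  have hψ : ψ = 0 ↔ c = 0 := by
    refine ⟨fun h => funext fun i => ?_, fun h => ?_⟩
    · simpa [ψ, signChar_eq_one_iff] using congr($h (Pi.single i 1))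
    · ext y
      simp [ψ, h]
  classical
  have := AddChar.sum_eq_ite ψ
  simp only [hψ, Fintype.card_pi, ZMod.card, Finset.prod_const, Finset.card_univ] at this
  simpa [ψ] using this

lemma sum_sum_signChar_dotProduct_mulVec (B : Matrix ι ι (ZMod 2)) :
    ∑ x, ∑ y, signChar (x ⬝ᵥ B *ᵥ y) = 2 ^ Fintype.card ι * #{x | Bᵀ *ᵥ x = 0} := by
  simp_rw [dotProduct_mulVec, ← mulVec_transpose, sum_signChar_dotProduct, Finset.sum_ite,
    Finset.sum_const_zero, add_zero, Finset.sum_const, nsmul_eq_mul, mul_comm]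

lemma sq_sum_signChar_le (Q : (ι → ZMod 2) → ZMod 2) (B : Matrix ι ι (ZMod 2))
    (hQ : ∀ x z, Q (x + z) = Q x + Q z + x ⬝ᵥ B *ᵥ z) :
    (∑ x, signChar (Q x)) ^ 2 ≤ ∑ x, ∑ y, signChar (x ⬝ᵥ B *ᵥ y) := by
  have hsq : (∑ x, signChar (Q x)) ^ 2 =
      ∑ z, signChar (Q z) * ∑ x, signChar (x ⬝ᵥ B *ᵥ z) := by
    calc (∑ x, signChar (Q x)) ^ 2
        = ∑ x, ∑ z, signChar (Q x) * signChar (Q (x + z)) := by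
          rw [sq, Finset.sum_mul_sum]
          exact Finset.sum_congr rfl fun x _ =>
            (Fintype.sum_equiv (Equiv.addLeft x) _ _ fun _ => rfl).symm
      _ = ∑ x, ∑ z, signChar (Q z) * signChar (x ⬝ᵥ B *ᵥ z) := by
          refine Finset.sum_congr rfl fun x _ => Finset.sum_congr rfl fun z _ => ?_
          rw [← AddChar.map_add_eq_mul, hQ, ← add_assoc, ← add_assoc, CharTwo.add_self_eq_zero,
            zero_add, AddChar.map_add_eq_mul]
      _ = _ := by
          rw [Finset.sum_comm]
          simp_rw [Finset.mul_sum]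
  have hnonneg (z : ι → ZMod 2) : 0 ≤ ∑ x, signChar (x ⬝ᵥ B *ᵥ z) := by
    simp_rw [dotProduct_comm _ (B *ᵥ z), sum_signChar_dotProduct]
    positivity
  rw [hsq, Finset.sum_comm (f := fun x y => signChar (x ⬝ᵥ B *ᵥ y))]
  exact Finset.sum_le_sum fun z _ => mul_le_of_le_one_left (hnonneg z) (signChar_le_one _)

end CharacterSums

lemma card_mulVec_eq_zero {K m n : Type*} [Field K] [Fintype K] [DecidableEq K] [Fintype m]
    [Fintype n] [DecidableEq n] (A : Matrix m n K) :
    #{x | A *ᵥ x = 0} = Fintype.card K ^ (Fintype.card n - A.rank) := by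
  rw [← Fintype.card_subtype, Fintype.card_eq_nat_card, Fintype.card_eq_nat_card]
  have e : {x // A *ᵥ x = 0} ≃ LinearMap.ker A.mulVecLin :=
    Equiv.subtypeEquivRight fun x => by simp [LinearMap.mem_ker]
  rw [Nat.card_congr e, Module.natCard_eq_pow_finrank (K := K)]
  congr 1
  have h := LinearMap.finrank_range_add_finrank_ker A.mulVecLin
  rw [Module.finrank_pi] at h
  rw [Matrix.rank]
  omega

section MatrixForms

variable {R ι : Type*} [CommRing R] [Fintype ι]

lemma dotProduct_mulVec_eq_sum_sum (M : Matrix ι ι R) (x y : ι → R) :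
    x ⬝ᵥ M *ᵥ y = ∑ u, ∑ v, M u v * (x u * y v) := by
  simp only [dotProduct, mulVec, Finset.mul_sum]
  exact Finset.sum_congr rfl fun u _ => Finset.sum_congr rfl fun v _ => by ring

lemma add_dotProduct_mulVec_add (M : Matrix ι ι R) (x z : ι → R) :
    (x + z) ⬝ᵥ M *ᵥ (x + z) = x ⬝ᵥ M *ᵥ x + z ⬝ᵥ M *ᵥ z + x ⬝ᵥ (M + Mᵀ) *ᵥ z := by
  simp only [mulVec_add, add_mulVec, dotProduct_add, add_dotProduct, dotProduct_transpose_mulVec]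
  abel

end MatrixForms

section EdgeParity

variable {V : Type*} [Fintype V] [LinearOrder V]

lemma card_edgeSet_eq_card_lt (H : SimpleGraph V) [DecidableRel H.Adj] :
    Nat.card H.edgeSet = #{p : V × V | p.1 < p.2 ∧ H.Adj p.1 p.2} := by
  rw [Nat.card_eq_fintype_card, ← SimpleGraph.edgeFinset_card]
  symm
  refine Finset.card_nbij' (fun p => s(p.1, p.2)) (fun e => (e.inf, e.sup)) ?_ ?_ ?_ ?_
  · rintro ⟨u, v⟩ h
    simpa using (Finset.mem_filter.1 h).2.2
  · intro e he
    induction e with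
    | _ u v =>
      simp only [Finset.mem_coe, SimpleGraph.mem_edgeFinset, SimpleGraph.mem_edgeSet] at he
      rcases lt_or_gt_of_ne he.ne with h | h
      · simp [h.le, h, he]
      · simp [h.le, h, he.symm]
  · rintro ⟨u, v⟩ h
    simp [(Finset.mem_filter.1 h).2.1.le]
  · intro e _
    exact Sym2.sortEquiv.symm_apply_apply e

def indicatorVec (S : Finset V) : V → ZMod 2 := fun u => if u ∈ S then 1 else 0

def indicatorVecEquiv : Finset V ≃ (V → ZMod 2) where
  toFun := indicatorVec
  invFun x := {u | x u = 1}
  left_inv S := by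
    ext u
    by_cases h : u ∈ S <;> simp [indicatorVec, h]
  right_inv x := by
    funext u
    obtain h | h := ZMod.two_eq_zero_or_one (x u) <;> simp [indicatorVec, h]

open Classical in
def upperAdjMatrix (G : SimpleGraph V) : Matrix V V (ZMod 2) :=
  Matrix.of fun u v => if u < v ∧ G.Adj u v then 1 else 0

lemma neg_one_pow_card_edgeSet_inf (G H : SimpleGraph V) (f : V → V → ZMod 2)
    (hf : ∀ u v, u < v → (H.Adj u v ↔ f u v = 1)) :
    (-1 : ℝ) ^ Nat.card (G ⊓ H).edgeSet =
      signChar (∑ u, ∑ v, upperAdjMatrix G u v * f u v) := by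
  classical
  rw [card_edgeSet_eq_card_lt, ← signChar_natCast, Finset.card_filter]
  push_cast
  rw [Fintype.sum_prod_type]
  refine congrArg signChar (Finset.sum_congr rfl fun u _ => Finset.sum_congr rfl fun v _ => ?_)
  by_cases huv : u < v ∧ G.Adj u v
  · obtain h | h := ZMod.two_eq_zero_or_one (f u v) <;>
      simp [upperAdjMatrix, huv, hf u v huv.1, h]
  · have : ¬ (u < v ∧ G.Adj u v ∧ H.Adj u v) := fun h => huv ⟨h.1, h.2.1⟩
    simp [upperAdjMatrix, huv, this]

lemma neg_one_pow_card_edgeSet_inf_cliqueOn (G : SimpleGraph V) (S : Finset V) :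
    (-1 : ℝ) ^ Nat.card (G ⊓ cliqueOn S).edgeSet =
      signChar (indicatorVec S ⬝ᵥ upperAdjMatrix G *ᵥ indicatorVec S) := by
  rw [dotProduct_mulVec_eq_sum_sum]
  refine neg_one_pow_card_edgeSet_inf G _ _ fun u v huv => ?_
  by_cases hu : u ∈ S <;> by_cases hv : v ∈ S <;> simp [cliqueOn, indicatorVec, hu, hv, huv.ne]

lemma neg_one_pow_card_edgeSet_inf_triOn (G : SimpleGraph V) (S T : Finset V) :
    (-1 : ℝ) ^ Nat.card (G ⊓ triOn S T).edgeSet = signChar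
      (indicatorVec S ⬝ᵥ (upperAdjMatrix G + (upperAdjMatrix G)ᵀ) *ᵥ indicatorVec T) := by
  rw [add_mulVec, dotProduct_add, dotProduct_transpose_mulVec, dotProduct_mulVec_eq_sum_sum,
    dotProduct_mulVec_eq_sum_sum]
  simp only [← Finset.sum_add_distrib, ← mul_add]
  refine neg_one_pow_card_edgeSet_inf G _ _ fun u v _ => ?_
  by_cases h1 : u ∈ S <;> by_cases h2 : u ∈ T <;> by_cases h3 : v ∈ S <;>
    by_cases h4 : v ∈ T <;> simp [triOn, indicatorVec, h1, h2, h3, h4]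

end EdgeParity

variable {k : ℕ}

lemma adjMat_eq_upperAdjMatrix_add_transpose (G : SimpleGraph (Fin k)) :
    adjMat k G = upperAdjMatrix G + (upperAdjMatrix G)ᵀ := by
  ext u v
  rcases lt_trichotomy u v with h | rfl | h
  · by_cases hG : G.Adj u v <;> simp [adjMat, upperAdjMatrix, h, h.not_gt, hG]
  · simp [adjMat, upperAdjMatrix]
  · by_cases hG : G.Adj u v <;> simp [adjMat, upperAdjMatrix, h, h.not_gt, hG, G.adj_comm]

lemma lamCom_eq_sum_signChar (G : SimpleGraph (Fin k)) :
    lamCom k G = (2 ^ k)⁻¹ * ∑ x, signChar (x ⬝ᵥ upperAdjMatrix G *ᵥ x) := by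
  simp only [lamCom, neg_one_pow_card_edgeSet_inf_cliqueOn]
  congr 1
  exact Fintype.sum_equiv indicatorVecEquiv _ _ fun _ => rfl

lemma lamPiv_eq_sum_signChar (G : SimpleGraph (Fin k)) :
    lamPiv k G = (2 ^ (2 * k))⁻¹ * ∑ x, ∑ y, signChar (x ⬝ᵥ adjMat k G *ᵥ y) := by
  simp only [lamPiv, neg_one_pow_card_edgeSet_inf_triOn, adjMat_eq_upperAdjMatrix_add_transpose]
  congr 1
  exact Fintype.sum_equiv indicatorVecEquiv _ _ fun _ =>
    Fintype.sum_equiv indicatorVecEquiv _ _ fun _ => rfl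

end

/-- `λ^Piv_G = 2^{−rank_{F₂}(A)}` and `(λ^Com_G)² ≤ λ^Piv_G`, where `A` is the
adjacency matrix of `G` over `F₂`. -/
theorem eigenvalue_rank (k : ℕ) (G : SimpleGraph (Fin k)) :
    lamPiv k G = ((2 : ℝ) ^ (adjMat k G).rank)⁻¹ ∧
    (lamCom k G) ^ 2 ≤ lamPiv k G := by
  constructor
  · have hrank : (adjMat k G).rank ≤ k := by
      simpa using (adjMat k G).rank_le_card_width
    rw [lamPiv_eq_sum_signChar, sum_sum_signChar_dotProduct_mulVec, card_mulVec_eq_zero,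
      rank_transpose, ZMod.card, Fintype.card_fin]
    push_cast
    rw [show 2 * k = (adjMat k G).rank + (k + (k - (adjMat k G).rank)) by omega, pow_add, pow_add]
    field_simp
  · rw [lamCom_eq_sum_signChar, lamPiv_eq_sum_signChar, mul_pow, inv_pow, ← pow_mul, mul_comm k]
    gcongr
    refine sq_sum_signChar_le _ _ fun x z => ?_
    rw [add_dotProduct_mulVec_add, adjMat_eq_upperAdjMatrix_add_transpose]
end
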